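/- Let θ ∈ (0, 1) and δ = cos(θπ/2). (i) For every u in the open unit disk D with Re u ≥ 0, one has Re(((1 + u)/(1 − u))^θ) ≥ δ · 2^{−θ}. (ii) Consequently, with φ = (1 + λ_θ)/2, w(z) = exp(−((1 + z)/(1 − z))^θ) and ψ = w ∘ φ, one has |ψ(z)| ≤ exp(−δ · 2^{−θ}) < 1 for every z ∈ D; in particular sup_{z ∈ D} |ψ(z)| < 1. -/

import Mathlib

/-!
For `Re v ≥ 0` the power `v ^ θ` has modulus `‖v‖ ^ θ` and argument `θ · arg v` with
`|arg v| ≤ π / 2`, so `Re (v ^ θ) ≥ ‖v‖ ^ θ cos (θπ/2)`; and when `Re u ≥ 0` the Cayley transform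
`v = (1 + u) / (1 - u)` has `‖v‖ ≥ 1`. This gives (i), even with `δ` in place of `δ 2^{-θ}`.
The lens map is `v ↦ v ^ θ` conjugated by the Cayley transform: `λ_θ z = (c - 1) / (c + 1)` with
`c = ((1 + z) / (1 - z)) ^ θ` in the right half-plane, so `λ_θ` maps `D` into `D` and `φ` maps
`D` into `D ∩ {Re ≥ 0}`, where (i) bounds `‖w u‖ = exp (-Re (((1 + u) / (1 - u)) ^ θ))`.
-/

noncomputable def lensMap (θ : ℝ) (z : ℂ) : ℂ :=
  ((1 + z) ^ (θ : ℂ) - (1 - z) ^ (θ : ℂ)) / ((1 + z) ^ (θ : ℂ) + (1 - z) ^ (θ : ℂ))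

open Complex Real

lemma Complex.norm_sub_one_lt_norm_add_one_iff (z : ℂ) : ‖z - 1‖ < ‖z + 1‖ ↔ 0 < z.re := by
  rw [← sq_lt_sq₀ (norm_nonneg _) (norm_nonneg _), Complex.sq_norm, Complex.sq_norm,
    normSq_apply, normSq_apply]
  simp only [sub_re, add_re, sub_im, add_im, one_re, one_im]
  constructor <;> intro h <;> nlinarith

lemma Complex.norm_sub_one_le_norm_add_one_iff (z : ℂ) : ‖z - 1‖ ≤ ‖z + 1‖ ↔ 0 ≤ z.re := by
  rw [← sq_le_sq₀ (norm_nonneg _) (norm_nonneg _), Complex.sq_norm, Complex.sq_norm,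
    normSq_apply, normSq_apply]
  simp only [sub_re, add_re, sub_im, add_im, one_re, one_im]
  constructor <;> intro h <;> nlinarith

lemma Complex.one_sub_ne_zero_of_norm_lt_one {z : ℂ} (hz : ‖z‖ < 1) : 1 - z ≠ 0 :=
  sub_ne_zero.mpr fun h ↦ by simp [← h] at hz

lemma Complex.re_one_add_div_one_sub_pos {z : ℂ} (hz : ‖z‖ < 1) :
    0 < ((1 + z) / (1 - z)).re := by
  have hz2 : z.re * z.re + z.im * z.im < 1 := by
    rw [← normSq_apply, ← Complex.sq_norm]
    nlinarith [norm_nonneg z]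
  rw [div_re, ← add_div]
  refine div_pos ?_ (normSq_pos.mpr (one_sub_ne_zero_of_norm_lt_one hz))
  simp only [add_re, sub_re, add_im, sub_im, one_re, one_im]
  nlinarith

lemma Complex.mul_cpow_of_re_pos {x y : ℂ} (hx : 0 < x.re) (hy : 0 < y.re) (w : ℂ) :
    (x * y) ^ w = x ^ w * y ^ w := by
  have hx0 : x ≠ 0 := fun h ↦ by simp [h] at hx
  have hy0 : y ≠ 0 := fun h ↦ by simp [h] at hy
  have hxarg := abs_lt.mp (abs_arg_lt_pi_div_two_iff.mpr (Or.inl hx))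
  have hyarg := abs_lt.mp (abs_arg_lt_pi_div_two_iff.mpr (Or.inl hy))
  rw [cpow_def_of_ne_zero hx0, cpow_def_of_ne_zero hy0, cpow_def_of_ne_zero (mul_ne_zero hx0 hy0),
    log_mul hx0 hy0 ⟨by linarith, by linarith⟩, add_mul, exp_add]

lemma Complex.re_cpow_ofReal_pos {v : ℂ} (hv : 0 < v.re) {θ : ℝ} (hθ : |θ| ≤ 1) :
    0 < (v ^ (θ : ℂ)).re := by
  have hv0 : v ≠ 0 := fun h ↦ by simp [h] at hv
  rw [cpow_ofReal_re]
  refine mul_pos (rpow_pos_of_pos (norm_pos_iff.mpr hv0) _) (cos_pos_of_mem_Ioo (abs_lt.mp ?_))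
  calc |arg v * θ| = |arg v| * |θ| := abs_mul _ _
    _ ≤ |arg v| := mul_le_of_le_one_right (abs_nonneg _) hθ
    _ < π / 2 := abs_arg_lt_pi_div_two_iff.mpr (Or.inl hv)

lemma Complex.norm_rpow_mul_cos_le_re_cpow_ofReal {v : ℂ} (hv : 0 ≤ v.re) {θ : ℝ}
    (hθ : |θ| ≤ 1) : ‖v‖ ^ θ * Real.cos (θ * π / 2) ≤ (v ^ (θ : ℂ)).re := by
  rw [cpow_ofReal_re]
  gcongr
  have hθπ : |θ * π / 2| = |θ| * π / 2 := by rw [abs_div, abs_mul, abs_of_pos pi_pos, abs_two]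
  rw [← Real.cos_abs (θ * π / 2), ← Real.cos_abs (arg v * θ), hθπ]
  apply cos_le_cos_of_nonneg_of_le_pi (abs_nonneg _)
  · nlinarith [pi_pos]
  · calc |arg v * θ| = |arg v| * |θ| := abs_mul _ _
      _ ≤ π / 2 * |θ| := by gcongr; exact abs_arg_le_pi_div_two_iff.mpr hv
      _ = |θ| * π / 2 := by ring

lemma cos_mul_pi_div_two_le_re_cpow_one_add_div_one_sub {θ : ℝ} (hθ₀ : 0 ≤ θ) (hθ₁ : θ ≤ 1)
    {u : ℂ} (hu : ‖u‖ < 1) (hre : 0 ≤ u.re) :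
    Real.cos (θ * π / 2) ≤ (((1 + u) / (1 - u)) ^ (θ : ℂ)).re := by
  have hnorm : 1 ≤ ‖(1 + u) / (1 - u)‖ := by
    rw [norm_div, one_le_div (norm_pos_iff.mpr (one_sub_ne_zero_of_norm_lt_one hu)),
      norm_sub_rev, add_comm]
    exact (norm_sub_one_le_norm_add_one_iff u).mpr hre
  have hθ : |θ| ≤ 1 := abs_le.mpr ⟨by linarith, hθ₁⟩
  have hcos : 0 ≤ Real.cos (θ * π / 2) :=
    cos_nonneg_of_mem_Icc ⟨by nlinarith [pi_pos], by nlinarith [pi_pos]⟩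
  calc Real.cos (θ * π / 2) ≤ ‖(1 + u) / (1 - u)‖ ^ θ * Real.cos (θ * π / 2) :=
        le_mul_of_one_le_left hcos (one_le_rpow hnorm hθ₀)
    _ ≤ _ := norm_rpow_mul_cos_le_re_cpow_ofReal (re_one_add_div_one_sub_pos hu).le hθ

lemma lensMap_eq_of_norm_lt_one (θ : ℝ) {z : ℂ} (hz : ‖z‖ < 1) :
    lensMap θ z = (((1 + z) / (1 - z)) ^ (θ : ℂ) - 1) / (((1 + z) / (1 - z)) ^ (θ : ℂ) + 1) := by
  have hre : 0 < (1 - z).re := by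
    rw [sub_re, one_re, sub_pos]
    exact (re_le_norm z).trans_lt hz
  have hne : (1 : ℂ) - z ≠ 0 := one_sub_ne_zero_of_norm_lt_one hz
  have hpow : (1 - z) ^ (θ : ℂ) ≠ 0 := by
    rw [Ne, cpow_eq_zero_iff, not_and_or]; exact Or.inl hne
  set c := ((1 + z) / (1 - z)) ^ (θ : ℂ)
  have hsplit : (1 + z) ^ (θ : ℂ) = c * (1 - z) ^ (θ : ℂ) := by
    rw [← mul_cpow_of_re_pos (re_one_add_div_one_sub_pos hz) hre, div_mul_cancel₀ _ hne]
  rw [lensMap, hsplit, ← sub_one_mul, ← add_one_mul, mul_div_mul_right _ _ hpow]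

lemma norm_lensMap_lt_one {θ : ℝ} (hθ : |θ| ≤ 1) {z : ℂ} (hz : ‖z‖ < 1) : ‖lensMap θ z‖ < 1 := by
  have hc := re_cpow_ofReal_pos (re_one_add_div_one_sub_pos hz) hθ
  rw [lensMap_eq_of_norm_lt_one θ hz, norm_div, div_lt_one ((norm_nonneg _).trans_lt
    ((norm_sub_one_lt_norm_add_one_iff _).mpr hc))]
  exact (norm_sub_one_lt_norm_add_one_iff _).mpr hc

lemma Complex.norm_one_add_div_two_lt_one {a : ℂ} (ha : ‖a‖ < 1) : ‖(1 + a) / 2‖ < 1 := by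
  rw [norm_div, Complex.norm_two, div_lt_one two_pos]
  linarith [norm_add_le 1 a, norm_one (α := ℂ)]

lemma Complex.re_one_add_div_two_nonneg {a : ℂ} (ha : ‖a‖ < 1) : 0 ≤ ((1 + a) / 2).re := by
  rw [div_ofNat_re, add_re, one_re]
  linarith [neg_abs_le a.re, abs_re_le_norm a]

/-- For `θ ∈ (0,1)` and `δ = cos(θπ/2)`:
(i) for `u` in the open unit disk with `Re u ≥ 0`, `Re(((1+u)/(1-u))^θ) ≥ δ 2^{-θ}`;
(ii) with `φ = (1 + λ_θ)/2`, `w(z) = exp(-((1+z)/(1-z))^θ)` and `ψ = w ∘ φ`,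
`|ψ(z)| ≤ exp(-δ 2^{-θ}) < 1` on the open unit disk; in particular the sup of `|ψ|`
over the disk is `< 1`. -/
theorem re_cpow_ge_and_abs_psi_lt_one (θ : ℝ) (hθ : θ ∈ Set.Ioo (0 : ℝ) 1)
    (δ : ℝ) (hδ : δ = Real.cos (θ * Real.pi / 2))
    (φ : ℂ → ℂ) (hφ : ∀ z, φ z = (1 + lensMap θ z) / 2)
    (w : ℂ → ℂ) (hw : ∀ z, w z = Complex.exp (-(((1 + z) / (1 - z)) ^ (θ : ℂ))))
    (ψ : ℂ → ℂ) (hψ : ψ = w ∘ φ) :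
    (∀ u : ℂ, ‖u‖ < 1 → 0 ≤ u.re →
        (((1 + u) / (1 - u)) ^ (θ : ℂ)).re ≥ δ * 2 ^ (-θ)) ∧
      (∀ z : ℂ, ‖z‖ < 1 → ‖ψ z‖ ≤ Real.exp (-(δ * 2 ^ (-θ)))) ∧
      Real.exp (-(δ * 2 ^ (-θ))) < 1 ∧
      ⨆ z : {z : ℂ // ‖z‖ < 1}, ‖ψ z‖ < 1 := by
  obtain ⟨hθ₀, hθ₁⟩ := hθ
  have hδ₀ : 0 < δ := hδ ▸ cos_pos_of_mem_Ioo ⟨by nlinarith [pi_pos], by nlinarith [pi_pos]⟩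
  have hbound : 0 < δ * 2 ^ (-θ) := by positivity
  have part_i (u : ℂ) (hu : ‖u‖ < 1) (hre : 0 ≤ u.re) :
      δ * 2 ^ (-θ) ≤ (((1 + u) / (1 - u)) ^ (θ : ℂ)).re :=
    calc δ * 2 ^ (-θ) ≤ δ :=
          mul_le_of_le_one_right hδ₀.le (rpow_le_one_of_one_le_of_nonpos one_le_two (by linarith))
      _ ≤ _ := hδ ▸ cos_mul_pi_div_two_le_re_cpow_one_add_div_one_sub hθ₀.le hθ₁.le hu hre
  have part_ii (z : ℂ) (hz : ‖z‖ < 1) : ‖ψ z‖ ≤ Real.exp (-(δ * 2 ^ (-θ))) := by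
    have hl := norm_lensMap_lt_one (abs_le.mpr ⟨by linarith, hθ₁.le⟩) hz
    rw [hψ, Function.comp_apply, hw, norm_exp, neg_re, Real.exp_le_exp, neg_le_neg_iff, hφ]
    exact part_i _ (norm_one_add_div_two_lt_one hl) (re_one_add_div_two_nonneg hl)
  have hlt : Real.exp (-(δ * 2 ^ (-θ))) < 1 := Real.exp_lt_one_iff.mpr (neg_lt_zero.mpr hbound)
  have : Nonempty {z : ℂ // ‖z‖ < 1} := ⟨⟨0, by simp⟩⟩
  exact ⟨part_i, part_ii, hlt, (ciSup_le fun z : {z : ℂ // ‖z‖ < 1} ↦ part_ii z z.2).trans_lt hlt⟩
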